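/- Let M satisfy the Reset Cliff assumption and let (P̂_h)_{h=1}^H be admissible estimates. If π^{AIL} is any global minimizer of the VAIL objective L(π) = Σ_{h=1}^H Σ_{(s,a)} |P^π_h(s,a) − P̂_h(s,a)|, then L(π^{AIL}) = L(π^E), where π^E is the expert policy. -/

import Mathlib

open Finset

/-- State distribution `d^π_h` of a policy `π` in an episodic tabular MDP
(time steps are 0-indexed: `stateDist ρ P π 0 = ρ`). -/
noncomputable def stateDist {S A : Type*} [Fintype S] [Fintype A] (ρ : S → ℝ)
    (P : ℕ → S → A → S → ℝ) (π : ℕ → S → A → ℝ) : ℕ → S → ℝ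
  | 0 => ρ
  | h + 1 => fun s' => ∑ s : S, ∑ a : A, stateDist ρ P π h s * π h s a * P h s a s'

/-- State-action distribution `P^π_h(s,a) = d^π_h(s) π_h(a|s)`. -/
noncomputable def saDist {S A : Type*} [Fintype S] [Fintype A] (ρ : S → ℝ)
    (P : ℕ → S → A → S → ℝ) (π : ℕ → S → A → ℝ) (h : ℕ) (s : S) (a : A) : ℝ :=
  stateDist ρ P π h s * π h s a

/-- Policy value `V^π = Σ_{h<H} Σ_{(s,a)} P^π_h(s,a) r_h(s,a)`. -/
noncomputable def policyValue {S A : Type*} [Fintype S] [Fintype A] (ρ : S → ℝ)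
    (P : ℕ → S → A → S → ℝ) (π : ℕ → S → A → ℝ) (r : ℕ → S → A → ℝ) (H : ℕ) : ℝ :=
  ∑ h ∈ Finset.range H, ∑ s : S, ∑ a : A, saDist ρ P π h s a * r h s a

/-- `π` is a (Markovian, non-stationary) policy. -/
def IsPolicy {S A : Type*} [Fintype A] (π : ℕ → S → A → ℝ) : Prop :=
  ∀ h s, (∀ a, 0 ≤ π h s a) ∧ (∑ a : A, π h s a) = 1

/-- `P` is a transition function. -/
def IsTransition {S A : Type*} [Fintype S] (P : ℕ → S → A → S → ℝ) : Prop :=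
  ∀ h s a, (∀ s', 0 ≤ P h s a s') ∧ (∑ s' : S, P h s a s') = 1

/-- `ρ` is an initial state distribution. -/
def IsInitDist {S : Type*} [Fintype S] (ρ : S → ℝ) : Prop :=
  (∀ s, 0 ≤ ρ s) ∧ (∑ s : S, ρ s) = 1

/-- Rewards take values in `[0,1]`. -/
def IsReward {S A : Type*} (r : ℕ → S → A → ℝ) : Prop :=
  ∀ h s a, 0 ≤ r h s a ∧ r h s a ≤ 1

/-- The VAIL state-action distribution matching objective
`L(π) = Σ_{h<H} Σ_{(s,a)} |P^π_h(s,a) − Q_h(s,a)|`. -/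
noncomputable def vailLoss {S A : Type*} [Fintype S] [Fintype A] (ρ : S → ℝ)
    (P : ℕ → S → A → S → ℝ) (π : ℕ → S → A → ℝ) (Q : ℕ → S → A → ℝ) (H : ℕ) : ℝ :=
  ∑ h ∈ Finset.range H, ∑ s : S, ∑ a : A, |saDist ρ P π h s a - Q h s a|

/-- The Reset Cliff assumption: good states `G` (with bad states `Gᶜ`), expert action `a1`. -/
def ResetCliff {S A : Type*} [Fintype S] [Fintype A] [DecidableEq S]
    (ρ : S → ℝ) (P : ℕ → S → A → S → ℝ) (r : ℕ → S → A → ℝ)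
    (G : Finset S) (a1 : A) : Prop :=
  G.Nonempty ∧
  (∀ (h : ℕ), ∀ s ∈ G, r h s a1 = 1) ∧
  (∀ (h : ℕ) (s : S) (a : A), (s ∉ G ∨ a ≠ a1) → r h s a = 0) ∧
  (∀ (h : ℕ), ∀ s ∈ G, (∑ s' ∈ G, P h s a1 s') = 1) ∧
  (∀ (h : ℕ), ∀ s ∈ G, ∀ s' ∈ G, 0 < P h s a1 s') ∧
  (∀ (h : ℕ), ∀ s ∈ G, ∀ a : A, a ≠ a1 → (∑ s' ∈ Gᶜ, P h s a s') = 1) ∧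
  (∀ (h : ℕ), ∀ s ∉ G, ∀ a : A, (∑ s' ∈ Gᶜ, P h s a s') = 1) ∧
  (∀ s ∈ G, 0 < ρ s) ∧
  (∀ s ∉ G, ρ s = 0)

/-- Admissible estimates for the expert state-action distributions on a Reset Cliff instance. -/
def AdmissibleEst {S A : Type*} [Fintype S] [DecidableEq S]
    (G : Finset S) (a1 : A) (Q : ℕ → S → A → ℝ) (H : ℕ) : Prop :=
  ∀ h < H, (∀ s a, 0 ≤ Q h s a) ∧
    (∀ (s : S) (a : A), (s ∉ G ∨ a ≠ a1) → Q h s a = 0) ∧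
    (∑ s ∈ G, Q h s a1) = 1

/-! For every policy `π`, the VAIL loss at step `h` splits as
`Σ_s ρ s + Σ_{s ∈ G} (|x_s − Q_h(s,a1)| − x_s)` with `x_s = P^π_h(s,a1)`, because `Q_h` vanishes
off `G × {a1}` and `P^π_h` is a nonnegative measure of total mass `Σ ρ`. Since `t ↦ |t − q| − t`
is antitone, the expert's loss is minimal as soon as `P^π_h(s,a1) ≤ P^πE_h(s,a1)` for all `π` and
`s ∈ G`. This holds because the good states can only be entered by playing `a1` from a good
state, and the expert does so with probability one. -/

theorem antitone_abs_sub_sub_self (q : ℝ) : Antitone fun t : ℝ => |t - q| - t := by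
  intro y x hyx
  have := abs_sub_le x y q
  rw [abs_of_nonneg (sub_nonneg.2 hyx)] at this
  dsimp only
  linarith

theorem sum_abs_sub_eq_sum_add_sum_of_eq_zero {ι : Type*} [Fintype ι]
    (T : Finset ι) {f q : ι → ℝ} (hf : ∀ i, 0 ≤ f i) (hq : ∀ i ∉ T, q i = 0) :
    ∑ i, |f i - q i| = ∑ i, f i + ∑ i ∈ T, (|f i - q i| - f i) := by
  classical
  have hcompl : ∑ i ∈ Tᶜ, |f i - q i| = ∑ i ∈ Tᶜ, f i :=
    sum_congr rfl fun i hi => by rw [hq i (mem_compl.1 hi), sub_zero, abs_of_nonneg (hf i)]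
  rw [← sum_add_sum_compl T, ← sum_add_sum_compl T f, hcompl, sum_sub_distrib]
  ring

theorem IsPolicy.le_one {S A : Type*} [Fintype A] {π : ℕ → S → A → ℝ} (hπ : IsPolicy π)
    (h : ℕ) (s : S) (a : A) : π h s a ≤ 1 :=
  (hπ h s).2 ▸ single_le_sum (fun b _ => (hπ h s).1 b) (mem_univ a)

theorem ResetCliff.transition_eq_zero {S A : Type*} [Fintype S] [Fintype A] [DecidableEq S]
    {ρ : S → ℝ} {P : ℕ → S → A → S → ℝ} {r : ℕ → S → A → ℝ} {G : Finset S} {a1 : A}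
    (hRC : ResetCliff ρ P r G a1) (hP : IsTransition P) {h : ℕ} {s : S} {a : A}
    (hsa : s ∉ G ∨ a ≠ a1) {s' : S} (hs' : s' ∈ G) : P h s a s' = 0 := by
  obtain ⟨-, -, -, -, -, hleak, hbad, -, -⟩ := hRC
  have hcompl : ∑ t ∈ Gᶜ, P h s a t = 1 := by
    by_cases hs : s ∈ G
    · exact hleak h s hs a (hsa.resolve_left (not_not.2 hs))
    · exact hbad h s hs a
  have hG : ∑ t ∈ G, P h s a t = 0 := by
    have := sum_add_sum_compl G (P h s a)
    rw [hcompl, (hP h s a).2] at this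
    linarith
  exact (sum_eq_zero_iff_of_nonneg fun t _ => (hP h s a).1 t).1 hG s' hs'

section StateDist

variable {S A : Type*} [Fintype S] [Fintype A] {ρ : S → ℝ} {P : ℕ → S → A → S → ℝ}
  {π : ℕ → S → A → ℝ}

theorem stateDist_nonneg (hρ : ∀ s, 0 ≤ ρ s) (hP : IsTransition P) (hπ : IsPolicy π) :
    ∀ h s, 0 ≤ stateDist ρ P π h s
  | 0, s => hρ s
  | h + 1, s' => sum_nonneg fun s _ => sum_nonneg fun a _ =>
      mul_nonneg (mul_nonneg (stateDist_nonneg hρ hP hπ h s) ((hπ h s).1 a)) ((hP h s a).1 s')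

theorem saDist_nonneg (hρ : ∀ s, 0 ≤ ρ s) (hP : IsTransition P) (hπ : IsPolicy π)
    (h : ℕ) (s : S) (a : A) : 0 ≤ saDist ρ P π h s a :=
  mul_nonneg (stateDist_nonneg hρ hP hπ h s) ((hπ h s).1 a)

theorem sum_stateDist (hP : IsTransition P) (hπ : IsPolicy π) :
    ∀ h, ∑ s, stateDist ρ P π h s = ∑ s, ρ s
  | 0 => rfl
  | h + 1 => by
    rw [← sum_stateDist hP hπ h]
    calc ∑ s', ∑ s, ∑ a, stateDist ρ P π h s * π h s a * P h s a s'
        = ∑ s, ∑ a, ∑ s', stateDist ρ P π h s * π h s a * P h s a s' := by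
          rw [sum_comm]
          exact sum_congr rfl fun s _ => sum_comm
      _ = ∑ s, stateDist ρ P π h s := by
          simp only [← mul_sum, (hP _ _ _).2, mul_one, (hπ _ _).2]

theorem sum_saDist (hP : IsTransition P) (hπ : IsPolicy π) (h : ℕ) :
    ∑ s, ∑ a, saDist ρ P π h s a = ∑ s, ρ s := by
  simp only [saDist, ← mul_sum, (hπ _ _).2, mul_one, sum_stateDist hP hπ]

theorem sum_abs_saDist_sub_eq (hρ : ∀ s, 0 ≤ ρ s) (hP : IsTransition P) (hπ : IsPolicy π)
    {Q : S → A → ℝ} {G : Finset S} {a1 : A} (hQ : ∀ s a, (s ∉ G ∨ a ≠ a1) → Q s a = 0)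
    (h : ℕ) :
    ∑ s, ∑ a, |saDist ρ P π h s a - Q s a|
      = ∑ s, ρ s + ∑ s ∈ G, (|saDist ρ P π h s a1 - Q s a1| - saDist ρ P π h s a1) := by
  have key := sum_abs_sub_eq_sum_add_sum_of_eq_zero (G ×ˢ {a1})
    (f := fun x : S × A => saDist ρ P π h x.1 x.2) (q := fun x => Q x.1 x.2)
    (fun x => saDist_nonneg hρ hP hπ h x.1 x.2)
    (fun x hx => hQ x.1 x.2 (not_and_or.1 (by simpa only [mem_product, mem_singleton] using hx)))
  simp only [Fintype.sum_prod_type, sum_product, sum_singleton] at key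
  rw [key, sum_saDist hP hπ]

end StateDist

section ResetCliff

variable {S A : Type*} [Fintype S] [Fintype A] [DecidableEq S] {ρ : S → ℝ}
  {P : ℕ → S → A → S → ℝ} {r : ℕ → S → A → ℝ} {G : Finset S} {a1 : A} {π πE : ℕ → S → A → ℝ}

theorem ResetCliff.stateDist_succ_of_mem (hRC : ResetCliff ρ P r G a1) (hP : IsTransition P)
    (h : ℕ) {s' : S} (hs' : s' ∈ G) :
    stateDist ρ P π (h + 1) s' = ∑ s ∈ G, stateDist ρ P π h s * π h s a1 * P h s a1 s' := by
  have hoff : ∀ s a, (s ∉ G ∨ a ≠ a1) → stateDist ρ P π h s * π h s a * P h s a s' = 0 :=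
    fun s a hsa => by rw [hRC.transition_eq_zero hP hsa hs', mul_zero]
  change ∑ s, ∑ a, stateDist ρ P π h s * π h s a * P h s a s' = _
  rw [← sum_subset (subset_univ G) fun s _ hs =>
    sum_eq_zero fun a _ => hoff s a (.inl hs)]
  exact sum_congr rfl fun s _ =>
    sum_eq_single a1 (fun a _ ha => hoff s a (.inr ha)) (absurd (mem_univ a1))

theorem ResetCliff.stateDist_le_of_mem (hRC : ResetCliff ρ P r G a1) (hρ : ∀ s, 0 ≤ ρ s)
    (hP : IsTransition P) (hπ : IsPolicy π) (hEa : ∀ h s, πE h s a1 = 1) :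
    ∀ h, ∀ s ∈ G, stateDist ρ P π h s ≤ stateDist ρ P πE h s
  | 0, _, _ => le_rfl
  | h + 1, s', hs' => by
    rw [hRC.stateDist_succ_of_mem hP h hs', hRC.stateDist_succ_of_mem hP h hs']
    refine sum_le_sum fun s hs => mul_le_mul_of_nonneg_right ?_ ((hP h s a1).1 s')
    rw [hEa, mul_one]
    exact (mul_le_of_le_one_right (stateDist_nonneg hρ hP hπ h s) (hπ.le_one h s a1)).trans
      (hRC.stateDist_le_of_mem hρ hP hπ hEa h s hs)

theorem ResetCliff.saDist_le_of_mem (hRC : ResetCliff ρ P r G a1) (hρ : ∀ s, 0 ≤ ρ s)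
    (hP : IsTransition P) (hπ : IsPolicy π) (hEa : ∀ h s, πE h s a1 = 1) (h : ℕ)
    {s : S} (hs : s ∈ G) : saDist ρ P π h s a1 ≤ saDist ρ P πE h s a1 := by
  rw [saDist, saDist, hEa, mul_one]
  exact (mul_le_of_le_one_right (stateDist_nonneg hρ hP hπ h s) (hπ.le_one h s a1)).trans
    (hRC.stateDist_le_of_mem hρ hP hπ hEa h s hs)

theorem ResetCliff.vailLoss_expert_le (hRC : ResetCliff ρ P r G a1) (hρ : ∀ s, 0 ≤ ρ s)
    (hP : IsTransition P) (hπ : IsPolicy π) (hπE : IsPolicy πE) (hEa : ∀ h s, πE h s a1 = 1)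
    {Q : ℕ → S → A → ℝ} {H : ℕ} (hQ : AdmissibleEst G a1 Q H) :
    vailLoss ρ P πE Q H ≤ vailLoss ρ P π Q H := by
  refine sum_le_sum fun h hh => ?_
  have hQh := (hQ h (mem_range.1 hh)).2.1
  rw [sum_abs_saDist_sub_eq hρ hP hπE hQh, sum_abs_saDist_sub_eq hρ hP hπ hQh]
  gcongr ∑ _, ρ _ + ?_
  exact sum_le_sum fun s hs =>
    antitone_abs_sub_sub_self _ (hRC.saDist_le_of_mem hρ hP hπ hEa h hs)

end ResetCliff

theorem vail_minimizer_loss_eq_expert_loss_general {S A : Type*} [Fintype S] [Fintype A]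
    [DecidableEq S]
    (ρ : S → ℝ) (P : ℕ → S → A → S → ℝ) (r : ℕ → S → A → ℝ)
    (πE πAIL : ℕ → S → A → ℝ) (G : Finset S) (a1 : A)
    (Q : ℕ → S → A → ℝ) (H : ℕ)
    (hρ : IsInitDist ρ) (hP : IsTransition P)
    (hE : IsPolicy πE) (hAILpol : IsPolicy πAIL)
    (hRC : ResetCliff ρ P r G a1)
    (hEa : ∀ h s, πE h s a1 = 1)
    (hQ : AdmissibleEst G a1 Q H)
    (hmin : ∀ π, IsPolicy π → vailLoss ρ P πAIL Q H ≤ vailLoss ρ P π Q H) :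
    vailLoss ρ P πAIL Q H = vailLoss ρ P πE Q H :=
  le_antisymm (hmin πE hE) (hRC.vailLoss_expert_le hρ.1 hP hAILpol hE hEa hQ)

/-- on any Reset Cliff instance with admissible estimates, any global minimizer
`πAIL` of the VAIL objective attains the same objective value as the expert policy. -/
theorem vail_minimizer_loss_eq_expert_loss {S A : Type*} [Fintype S] [Fintype A]
    [Nonempty S] [Nonempty A] [DecidableEq S]
    (ρ : S → ℝ) (P : ℕ → S → A → S → ℝ) (r : ℕ → S → A → ℝ)
    (πE πAIL : ℕ → S → A → ℝ) (G : Finset S) (a1 : A)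
    (Q : ℕ → S → A → ℝ) (H : ℕ) (hH : 1 ≤ H)
    (hρ : IsInitDist ρ) (hP : IsTransition P) (hr : IsReward r)
    (hE : IsPolicy πE) (hAILpol : IsPolicy πAIL)
    (hRC : ResetCliff ρ P r G a1)
    (hEa : ∀ h s, πE h s a1 = 1)
    (hQ : AdmissibleEst G a1 Q H)
    (hmin : ∀ π, IsPolicy π → vailLoss ρ P πAIL Q H ≤ vailLoss ρ P π Q H) :
    vailLoss ρ P πAIL Q H = vailLoss ρ P πE Q H :=
  vail_minimizer_loss_eq_expert_loss_general ρ P r πE πAIL G a1 Q H hρ hP hE hAILpol hRC hEa hQ hmin
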